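/- Let A ∈ {0,1} be independent of (C, Y(1,·), Y(0,·), M(1), M(0)) with P(A = 1) = π ∈ (0,1), on a finite probability space. Suppose consistency holds: Y = Y(a, M(a)) and M = M(a) on the event {A = a}. Suppose sequential ignorability: for each a, (M(1), M(0)) is conditionally independent of the family {Y(a, m)}_m given (A, C), and positivity P(M = m | A = a, C = c) > 0 for all (m, a, c) with P(C = c) > 0. Then for any a, a* ∈ {0,1}: E[Y(a, M(a*))] = Σ_c P(C = c) Σ_m E[Y | A = a, M = m, C = c] P(M = m | A = a*, C = c). -/
import Mathlib

open Finset

open scoped Classical in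
noncomputable def Pr {Ω : Type*} [Fintype Ω] (p : Ω → ℝ) (E : Ω → Prop) : ℝ :=
  ∑ ω, if E ω then p ω else 0

noncomputable def EV {Ω : Type*} [Fintype Ω] (p : Ω → ℝ) (X : Ω → ℝ) : ℝ :=
  ∑ ω, p ω * X ω

noncomputable def cPr {Ω : Type*} [Fintype Ω] (p : Ω → ℝ) (E F : Ω → Prop) : ℝ :=
  Pr p (fun ω => E ω ∧ F ω) / Pr p F

open scoped Classical in
noncomputable def cEV {Ω : Type*} [Fintype Ω] (p : Ω → ℝ) (X : Ω → ℝ) (F : Ω → Prop) : ℝ :=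
  (∑ ω, if F ω then p ω * X ω else 0) / Pr p F

section Aux

open scoped Classical

variable {Ω : Type*} [Fintype Ω]

noncomputable def Wt (p : Ω → ℝ) (E : Ω → Prop) (f : Ω → ℝ) : ℝ :=
  ∑ ω, if E ω then p ω * f ω else 0

lemma Wt_congr (p : Ω → ℝ) {E E' : Ω → Prop} {f f' : Ω → ℝ}
    (hE : ∀ ω, E ω ↔ E' ω) (hf : ∀ ω, E' ω → f ω = f' ω) :
    Wt p E f = Wt p E' f' := by
  unfold Wt
  refine Finset.sum_congr rfl fun ω _ => ?_
  by_cases h : E' ω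
  · rw [if_pos ((hE ω).mpr h), if_pos h, hf ω h]
  · rw [if_neg (fun hh => h ((hE ω).mp hh)), if_neg h]

lemma Pr_eq_Wt (p : Ω → ℝ) (E : Ω → Prop) : Pr p E = Wt p E fun _ => 1 := by
  unfold Pr Wt
  refine Finset.sum_congr rfl fun ω _ => ?_
  split_ifs <;> simp

lemma Pr_congr (p : Ω → ℝ) {E E' : Ω → Prop} (hE : ∀ ω, E ω ↔ E' ω) :
    Pr p E = Pr p E' := by
  unfold Pr
  refine Finset.sum_congr rfl fun ω _ => ?_
  by_cases h : E' ω
  · rw [if_pos ((hE ω).mpr h), if_pos h]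
  · rw [if_neg (fun hh => h ((hE ω).mp hh)), if_neg h]

lemma Pr_nonneg {p : Ω → ℝ} (hp : ∀ ω, 0 ≤ p ω) (E : Ω → Prop) : 0 ≤ Pr p E :=
  Finset.sum_nonneg fun ω _ => by split_ifs; exacts [hp ω, le_refl 0]

lemma pzero_of_Pr_zero {p : Ω → ℝ} (hp : ∀ ω, 0 ≤ p ω) {E : Ω → Prop}
    (h : Pr p E = 0) : ∀ ω, E ω → p ω = 0 := by
  intro ω hω
  have h2 := (Finset.sum_eq_zero_iff_of_nonneg
    (fun ω _ => by split_ifs; exacts [hp ω, le_refl 0])).mp h ω (Finset.mem_univ ω)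
  rwa [if_pos hω] at h2

lemma Wt_eq_zero {p : Ω → ℝ} {E : Ω → Prop} (h : ∀ ω, E ω → p ω = 0) (f : Ω → ℝ) :
    Wt p E f = 0 :=
  Finset.sum_eq_zero fun ω _ => by
    by_cases hω : E ω
    · rw [if_pos hω, h ω hω, zero_mul]
    · rw [if_neg hω]

lemma Pr_of_false {p : Ω → ℝ} {E : Ω → Prop} (h : ∀ ω, ¬ E ω) : Pr p E = 0 :=
  Finset.sum_eq_zero fun ω _ => if_neg (h ω)

lemma cPr_pos {p : Ω → ℝ} (hp : ∀ ω, 0 ≤ p ω) {E F : Ω → Prop} (h : 0 < cPr p E F) :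
    0 < Pr p (fun ω => E ω ∧ F ω) ∧ 0 < Pr p F := by
  unfold cPr at h
  by_cases hF : Pr p F = 0
  · rw [hF, div_zero] at h; exact absurd h (lt_irrefl 0)
  · have hFpos : 0 < Pr p F := lt_of_le_of_ne (Pr_nonneg hp F) (Ne.symm hF)
    refine ⟨?_, hFpos⟩
    have h2 : 0 < Pr p (fun ω => E ω ∧ F ω) / Pr p F * Pr p F := mul_pos h hFpos
    rwa [div_mul_cancel₀ _ hF] at h2

lemma ite_congr' {P Q : Prop} (i1 : Decidable P) (i2 : Decidable Q) (h : P ↔ Q) (x y : ℝ) :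
    (@ite ℝ P i1 x y) = @ite ℝ Q i2 x y := by
  by_cases hP : P
  · rw [if_pos hP, if_pos (h.mp hP)]
  · rw [if_neg hP, if_neg (fun hq => hP (h.mpr hq))]

lemma sum_fiber {τ : Type*} [DecidableEq τ] (p : Ω → ℝ) (T : Ω → τ) (E : Ω → Prop)
    (g : τ → ℝ) :
    Wt p E (fun ω => g (T ω)) =
      ∑ t ∈ Finset.univ.image T, g t * Pr p (fun ω => E ω ∧ T ω = t) := by
  unfold Wt Pr
  simp_rw [Finset.mul_sum]
  rw [Finset.sum_comm]
  refine Finset.sum_congr rfl fun ω _ => ?_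
  rw [Finset.sum_eq_single (T ω)
    (fun t _ ht => by rw [if_neg (fun hh => ht hh.2.symm), mul_zero])
    (fun hmem => absurd (Finset.mem_image_of_mem T (Finset.mem_univ ω)) hmem)]
  by_cases h : E ω
  · rw [if_pos h, if_pos (show E ω ∧ T ω = T ω from ⟨h, rfl⟩)]; ring
  · rw [if_neg h, if_neg (show ¬(E ω ∧ T ω = T ω) from fun hh => h hh.1), mul_zero]

lemma transfer {τ : Type*} [DecidableEq τ] (p : Ω → ℝ) (T : Ω → τ) (P : Ω → Prop) (w : ℝ)
    (h : ∀ t, Pr p (fun ω => P ω ∧ T ω = t) = w * Pr p (fun ω => T ω = t))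
    (Q : τ → Prop) (g : τ → ℝ) :
    Wt p (fun ω => P ω ∧ Q (T ω)) (fun ω => g (T ω)) =
      w * Wt p (fun ω => Q (T ω)) (fun ω => g (T ω)) := by
  rw [sum_fiber p T (fun ω => P ω ∧ Q (T ω)) g, sum_fiber p T (fun ω => Q (T ω)) g,
    Finset.mul_sum]
  refine Finset.sum_congr rfl fun t _ => ?_
  by_cases hQ : Q t
  · have e1 : Pr p (fun ω => (P ω ∧ Q (T ω)) ∧ T ω = t) = Pr p (fun ω => P ω ∧ T ω = t) :=
      Pr_congr p fun ω => ⟨fun hh => ⟨hh.1.1, hh.2⟩,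
        fun hh => ⟨⟨hh.1, by rw [hh.2]; exact hQ⟩, hh.2⟩⟩
    have e2 : Pr p (fun ω => Q (T ω) ∧ T ω = t) = Pr p (fun ω => T ω = t) :=
      Pr_congr p fun ω => ⟨fun hh => hh.2, fun hh => ⟨by rw [hh]; exact hQ, hh⟩⟩
    rw [e1, e2, h t]; ring
  · rw [Pr_of_false (E := fun ω => (P ω ∧ Q (T ω)) ∧ T ω = t)
        (fun ω hh => hQ (by rw [← hh.2]; exact hh.1.2)),
      Pr_of_false (E := fun ω => Q (T ω) ∧ T ω = t)
        (fun ω hh => hQ (by rw [← hh.2]; exact hh.1))]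
    ring

lemma condfact {τ σ : Type*} [DecidableEq τ] [DecidableEq σ] (p : Ω → ℝ)
    (hp : ∀ ω, 0 ≤ p ω) (F : Ω → Prop) (T : Ω → τ) (U : Ω → σ)
    (h : ∀ t u, cPr p (fun ω => T ω = t ∧ U ω = u) F =
      cPr p (fun ω => T ω = t) F * cPr p (fun ω => U ω = u) F)
    (f : τ → ℝ) (g : σ → ℝ) :
    Pr p F * Wt p F (fun ω => f (T ω) * g (U ω)) =
      Wt p F (fun ω => f (T ω)) * Wt p F (fun ω => g (U ω)) := by
  by_cases hF : Pr p F = 0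
  · have h0 := pzero_of_Pr_zero hp hF
    rw [hF, Wt_eq_zero h0, Wt_eq_zero h0, zero_mul, zero_mul]
  · have key : ∀ t u, Pr p (fun ω => F ω ∧ T ω = t ∧ U ω = u) * Pr p F =
        Pr p (fun ω => F ω ∧ T ω = t) * Pr p (fun ω => F ω ∧ U ω = u) := by
      intro t u
      have h1 : Pr p (fun ω => (T ω = t ∧ U ω = u) ∧ F ω) / Pr p F =
          Pr p (fun ω => T ω = t ∧ F ω) / Pr p F *
            (Pr p (fun ω => U ω = u ∧ F ω) / Pr p F) := h t u
      have e0 : Pr p (fun ω => (T ω = t ∧ U ω = u) ∧ F ω) =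
          Pr p (fun ω => F ω ∧ T ω = t ∧ U ω = u) := Pr_congr p fun ω => and_comm
      have e1 : Pr p (fun ω => T ω = t ∧ F ω) = Pr p (fun ω => F ω ∧ T ω = t) :=
        Pr_congr p fun ω => and_comm
      have e2 : Pr p (fun ω => U ω = u ∧ F ω) = Pr p (fun ω => F ω ∧ U ω = u) :=
        Pr_congr p fun ω => and_comm
      rw [e0, e1, e2, div_mul_div_comm, div_eq_div_iff hF (mul_ne_zero hF hF)] at h1
      have h2 : Pr p (fun ω => F ω ∧ T ω = t ∧ U ω = u) * Pr p F * Pr p F =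
          Pr p (fun ω => F ω ∧ T ω = t) * Pr p (fun ω => F ω ∧ U ω = u) * Pr p F := by
        linear_combination h1
      exact mul_right_cancel₀ hF h2
    have himg : (Finset.univ.image fun ω => (T ω, U ω)) ⊆
        (Finset.univ.image T) ×ˢ (Finset.univ.image U) := by
      intro v hv
      obtain ⟨ω, -, rfl⟩ := Finset.mem_image.mp hv
      exact Finset.mem_product.mpr ⟨Finset.mem_image_of_mem T (Finset.mem_univ ω),
        Finset.mem_image_of_mem U (Finset.mem_univ ω)⟩
    have hL : Wt p F (fun ω => f (T ω) * g (U ω)) =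
        Wt p F (fun ω => (fun v : τ × σ => f v.1 * g v.2) ((fun ω => (T ω, U ω)) ω)) := rfl
    have lhs1 : Wt p F (fun ω => f (T ω) * g (U ω)) =
        ∑ t ∈ Finset.univ.image T, ∑ u ∈ Finset.univ.image U,
          f t * g u * Pr p (fun ω => F ω ∧ T ω = t ∧ U ω = u) := by
      rw [hL, sum_fiber p (fun ω => (T ω, U ω)) F (fun v => f v.1 * g v.2)]
      refine Eq.trans (Finset.sum_subset himg fun v _ hv => ?_) ?_
      · rw [Pr_of_false (E := fun ω => F ω ∧ (T ω, U ω) = v)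
          (fun ω hh => hv (hh.2 ▸ Finset.mem_image_of_mem _ (Finset.mem_univ ω))), mul_zero]
      rw [Finset.sum_product]
      refine Finset.sum_congr rfl fun t _ => Finset.sum_congr rfl fun u _ => ?_
      show f t * g u * Pr p (fun ω => F ω ∧ (T ω, U ω) = (t, u)) = _
      rw [show Pr p (fun ω => F ω ∧ (T ω, U ω) = (t, u)) =
        Pr p (fun ω => F ω ∧ T ω = t ∧ U ω = u) from Pr_congr p fun ω => by
          rw [Prod.mk.injEq]]
    rw [lhs1, sum_fiber p T F f, sum_fiber p U F g, Finset.sum_mul_sum, Finset.mul_sum]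
    refine Finset.sum_congr rfl fun t _ => ?_
    rw [Finset.mul_sum]
    refine Finset.sum_congr rfl fun u _ => ?_
    linear_combination (f t * g u) * key t u

lemma condfact' {τ σ : Type*} [DecidableEq τ] [DecidableEq σ] (p : Ω → ℝ)
    (hp : ∀ ω, 0 ≤ p ω) (F : Ω → Prop) (T : Ω → τ) (U : Ω → σ)
    (h : ∀ t u, cPr p (fun ω => T ω = t ∧ U ω = u) F =
      cPr p (fun ω => T ω = t) F * cPr p (fun ω => U ω = u) F)
    (Qt : τ → Prop) (g : σ → ℝ) :
    Pr p F * Wt p (fun ω => F ω ∧ Qt (T ω)) (fun ω => g (U ω)) =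
      Pr p (fun ω => F ω ∧ Qt (T ω)) * Wt p F (fun ω => g (U ω)) := by
  have h0 := condfact p hp F T U h (fun t => if Qt t then 1 else 0) g
  have e1 : Wt p F (fun ω => (fun t => if Qt t then (1:ℝ) else 0) (T ω) * g (U ω)) =
      Wt p (fun ω => F ω ∧ Qt (T ω)) (fun ω => g (U ω)) := by
    unfold Wt
    refine Finset.sum_congr rfl fun ω _ => ?_
    by_cases hF : F ω <;> by_cases hQ : Qt (T ω) <;> simp [hF, hQ]
  have e2 : Wt p F (fun ω => (fun t => if Qt t then (1:ℝ) else 0) (T ω)) =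
      Pr p (fun ω => F ω ∧ Qt (T ω)) := by
    unfold Wt Pr
    refine Finset.sum_congr rfl fun ω _ => ?_
    by_cases hF : F ω <;> by_cases hQ : Qt (T ω) <;> simp [hF, hQ]
  rw [e1, e2] at h0
  exact h0

end Aux
/-- Nonparametric identification (mediation formula): under randomization,
consistency, sequential ignorability and positivity, the cross-world mean
E[Y(a, M(a*))] equals the integral of the outcome regression against the
mediator density under arm a*, averaged over covariates. -/
theorem mediation_formula
    {Ω 𝓜 𝓒 : Type*} [Fintype Ω] [Fintype 𝓜] [Fintype 𝓒]
    (p : Ω → ℝ) (hp : ∀ ω, 0 ≤ p ω) (hp1 : ∑ ω, p ω = 1)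
    (A : Ω → Fin 2) (C : Ω → 𝓒) (M : Ω → 𝓜) (Y : Ω → ℝ)
    (Ypot : Fin 2 → 𝓜 → Ω → ℝ) (Mpot : Fin 2 → Ω → 𝓜)
    (π : ℝ) (hπ : 0 < π ∧ π < 1) (hA : Pr p (fun ω => A ω = 1) = π)
    (hindep : ∀ (a : Fin 2) (t : 𝓒 × (Fin 2 → 𝓜 → ℝ) × (Fin 2 → 𝓜)),
      Pr p (fun ω => A ω = a ∧
          (C ω, fun a' m => Ypot a' m ω, fun a' => Mpot a' ω) = t) =
        Pr p (fun ω => A ω = a) *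
        Pr p (fun ω => (C ω, fun a' m => Ypot a' m ω, fun a' => Mpot a' ω) = t))
    (hconsM : ∀ ω, M ω = Mpot (A ω) ω)
    (hconsY : ∀ ω, Y ω = Ypot (A ω) (M ω) ω)
    (hseq : ∀ (a a' : Fin 2) (c : 𝓒) (mm : 𝓜 × 𝓜) (yv : 𝓜 → ℝ),
      cPr p (fun ω => (Mpot 1 ω, Mpot 0 ω) = mm ∧ (fun m => Ypot a m ω) = yv)
          (fun ω => A ω = a' ∧ C ω = c) =
        cPr p (fun ω => (Mpot 1 ω, Mpot 0 ω) = mm) (fun ω => A ω = a' ∧ C ω = c) *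
        cPr p (fun ω => (fun m => Ypot a m ω) = yv) (fun ω => A ω = a' ∧ C ω = c))
    (hposM : ∀ (a : Fin 2) (c : 𝓒) (m : 𝓜), 0 < Pr p (fun ω => C ω = c) →
      0 < cPr p (fun ω => M ω = m) (fun ω => A ω = a ∧ C ω = c))
    (a astar : Fin 2) :
    EV p (fun ω => Ypot a (Mpot astar ω) ω) =
      ∑ c : 𝓒, Pr p (fun ω => C ω = c) *
        ∑ m : 𝓜, cEV p Y (fun ω => A ω = a ∧ M ω = m ∧ C ω = c) *
          cPr p (fun ω => M ω = m) (fun ω => A ω = astar ∧ C ω = c) := by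
  classical
  have htwo : ∀ x : Fin 2, x = 0 ∨ x = 1 := by decide
  -- arm probabilities are positive
  have hsplit : Pr p (fun ω => A ω = 0) + Pr p (fun ω => A ω = 1) = 1 := by
    rw [← hp1]
    unfold Pr
    rw [← Finset.sum_add_distrib]
    refine Finset.sum_congr rfl fun ω _ => ?_
    rcases htwo (A ω) with h | h <;> simp [h]
  have hApos : ∀ a' : Fin 2, 0 < Pr p (fun ω => A ω = a') := by
    intro a'
    rcases htwo a' with rfl | rfl
    · have h1 : Pr p (fun ω => A ω = 1) = π := hA
      linarith [hπ.2]
    · rw [hA]; exact hπ.1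
  -- generic consequence of randomization
  have fact1 : ∀ (a' : Fin 2) (Q : (𝓒 × (Fin 2 → 𝓜 → ℝ) × (Fin 2 → 𝓜)) → Prop)
      (f : (𝓒 × (Fin 2 → 𝓜 → ℝ) × (Fin 2 → 𝓜)) → ℝ),
      Wt p (fun ω => A ω = a' ∧ Q (C ω, fun a'' m' => Ypot a'' m' ω, fun a'' => Mpot a'' ω))
          (fun ω => f (C ω, fun a'' m' => Ypot a'' m' ω, fun a'' => Mpot a'' ω)) =
        Pr p (fun ω => A ω = a') *
          Wt p (fun ω => Q (C ω, fun a'' m' => Ypot a'' m' ω, fun a'' => Mpot a'' ω))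
            (fun ω => f (C ω, fun a'' m' => Ypot a'' m' ω, fun a'' => Mpot a'' ω)) :=
    fun a' Q f =>
      transfer p (fun ω => (C ω, fun a'' m' => Ypot a'' m' ω, fun a'' => Mpot a'' ω))
        (fun ω => A ω = a') (Pr p (fun ω => A ω = a')) (hindep a') Q f
  -- Step A: decompose the cross-world mean
  have perω : ∀ ω, p ω * Ypot a (Mpot astar ω) ω =
      ∑ c : 𝓒, ∑ m : 𝓜, (if C ω = c ∧ Mpot astar ω = m then p ω * Ypot a m ω else 0) := by
    intro ω
    have inner : ∀ c, (∑ m : 𝓜, if C ω = c ∧ Mpot astar ω = m then p ω * Ypot a m ω else 0)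
        = if C ω = c then p ω * Ypot a (Mpot astar ω) ω else 0 := by
      intro c
      by_cases hc : C ω = c
      · rw [if_pos hc, Finset.sum_eq_single (Mpot astar ω)
          (fun m _ hm => if_neg fun hh => hm hh.2.symm)
          (fun hmem => absurd (Finset.mem_univ _) hmem)]
        exact if_pos ⟨hc, rfl⟩
      · rw [if_neg hc]
        exact Finset.sum_eq_zero fun m _ => if_neg fun hh => hc hh.1
    rw [Finset.sum_congr rfl fun c (_ : c ∈ Finset.univ) => inner c,
      Finset.sum_eq_single (C ω)
        (fun c _ hc => if_neg fun hh => hc hh.symm)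
        (fun hmem => absurd (Finset.mem_univ _) hmem)]
    exact (if_pos rfl).symm
  have stepA : EV p (fun ω => Ypot a (Mpot astar ω) ω) =
      ∑ c : 𝓒, ∑ m : 𝓜, Wt p (fun ω => C ω = c ∧ Mpot astar ω = m) (fun ω => Ypot a m ω) := by
    calc EV p (fun ω => Ypot a (Mpot astar ω) ω)
        = ∑ ω, ∑ c : 𝓒, ∑ m : 𝓜,
            (if C ω = c ∧ Mpot astar ω = m then p ω * Ypot a m ω else 0) :=
          Finset.sum_congr rfl fun ω _ => perω ω
      _ = ∑ c : 𝓒, ∑ ω, ∑ m : 𝓜,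
            (if C ω = c ∧ Mpot astar ω = m then p ω * Ypot a m ω else 0) := Finset.sum_comm
      _ = ∑ c : 𝓒, ∑ m : 𝓜, ∑ ω,
            (if C ω = c ∧ Mpot astar ω = m then p ω * Ypot a m ω else 0) :=
          Finset.sum_congr rfl fun c _ => Finset.sum_comm
      _ = ∑ c : 𝓒, ∑ m : 𝓜, Wt p (fun ω => C ω = c ∧ Mpot astar ω = m) (fun ω => Ypot a m ω) :=
          Finset.sum_congr rfl fun c _ => Finset.sum_congr rfl fun m _ =>
            Finset.sum_congr rfl fun ω _ => ite_congr' _ _ Iff.rfl _ _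
  rw [stepA]
  refine Finset.sum_congr rfl fun c _ => ?_
  by_cases hw : Pr p (fun ω => C ω = c) = 0
  · have h0 := pzero_of_Pr_zero hp hw
    rw [hw, zero_mul]
    exact Finset.sum_eq_zero fun m _ => Wt_eq_zero (fun ω hω => h0 ω hω.1) _
  have hwpos : 0 < Pr p (fun ω => C ω = c) := lt_of_le_of_ne (Pr_nonneg hp _) (Ne.symm hw)
  rw [Finset.mul_sum]
  refine Finset.sum_congr rfl fun m _ => ?_
  -- specialized randomization facts
  have h1 : ∀ (a' b : Fin 2), Pr p (fun ω => A ω = a' ∧ C ω = c ∧ Mpot b ω = m) =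
      Pr p (fun ω => A ω = a') * Pr p (fun ω => C ω = c ∧ Mpot b ω = m) := by
    intro a' b
    have hf := fact1 a' (fun t => t.1 = c ∧ t.2.2 b = m) (fun _ => 1)
    rw [Pr_eq_Wt p (fun ω => A ω = a' ∧ C ω = c ∧ Mpot b ω = m),
      Pr_eq_Wt p (fun ω => C ω = c ∧ Mpot b ω = m)]
    exact hf
  have h2 : ∀ a' : Fin 2, Pr p (fun ω => A ω = a' ∧ C ω = c) =
      Pr p (fun ω => A ω = a') * Pr p (fun ω => C ω = c) := by
    intro a'
    have hf := fact1 a' (fun t => t.1 = c) (fun _ => 1)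
    rw [Pr_eq_Wt p (fun ω => A ω = a' ∧ C ω = c), Pr_eq_Wt p (fun ω => C ω = c)]
    exact hf
  have h3 : ∀ (a' b : Fin 2),
      Wt p (fun ω => A ω = a' ∧ C ω = c ∧ Mpot b ω = m) (fun ω => Ypot a m ω) =
        Pr p (fun ω => A ω = a') *
          Wt p (fun ω => C ω = c ∧ Mpot b ω = m) (fun ω => Ypot a m ω) :=
    fun a' b => fact1 a' (fun t => t.1 = c ∧ t.2.2 b = m) (fun t => t.2.1 a m)
  have h4 : ∀ a' : Fin 2,
      Wt p (fun ω => A ω = a' ∧ C ω = c) (fun ω => Ypot a m ω) =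
        Pr p (fun ω => A ω = a') * Wt p (fun ω => C ω = c) (fun ω => Ypot a m ω) :=
    fun a' => fact1 a' (fun t => t.1 = c) (fun t => t.2.1 a m)
  -- sequential ignorability, specialized
  have I3 : ∀ (a' b : Fin 2), Pr p (fun ω => A ω = a' ∧ C ω = c) *
        Wt p (fun ω => (A ω = a' ∧ C ω = c) ∧ Mpot b ω = m) (fun ω => Ypot a m ω) =
      Pr p (fun ω => (A ω = a' ∧ C ω = c) ∧ Mpot b ω = m) *
        Wt p (fun ω => A ω = a' ∧ C ω = c) (fun ω => Ypot a m ω) := by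
    intro a' b
    have hb : ∀ ω : Ω, (if b = 1 then Mpot 1 ω else Mpot 0 ω) = Mpot b ω := by
      intro ω; rcases htwo b with rfl | rfl <;> simp
    have h0 : Pr p (fun ω => A ω = a' ∧ C ω = c) *
          Wt p (fun ω => (A ω = a' ∧ C ω = c) ∧
            (if b = 1 then Mpot 1 ω else Mpot 0 ω) = m) (fun ω => Ypot a m ω) =
        Pr p (fun ω => (A ω = a' ∧ C ω = c) ∧
            (if b = 1 then Mpot 1 ω else Mpot 0 ω) = m) *
          Wt p (fun ω => A ω = a' ∧ C ω = c) (fun ω => Ypot a m ω) :=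
      condfact' p hp (fun ω => A ω = a' ∧ C ω = c)
        (fun ω => (Mpot 1 ω, Mpot 0 ω)) (fun ω => fun m' => Ypot a m' ω)
        (hseq a a' c)
        (fun mm => (if b = 1 then mm.1 else mm.2) = m) (fun yv => yv m)
    have eW : Wt p (fun ω => (A ω = a' ∧ C ω = c) ∧
          (if b = 1 then Mpot 1 ω else Mpot 0 ω) = m) (fun ω => Ypot a m ω)
        = Wt p (fun ω => (A ω = a' ∧ C ω = c) ∧ Mpot b ω = m) (fun ω => Ypot a m ω) :=
      Wt_congr p (fun ω => by rw [hb ω]) (fun _ _ => rfl)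
    have eP : Pr p (fun ω => (A ω = a' ∧ C ω = c) ∧
          (if b = 1 then Mpot 1 ω else Mpot 0 ω) = m)
        = Pr p (fun ω => (A ω = a' ∧ C ω = c) ∧ Mpot b ω = m) :=
      Pr_congr p (fun ω => by rw [hb ω])
    rw [eW, eP] at h0
    exact h0
  -- the cPr factor
  have hcPr : cPr p (fun ω => M ω = m) (fun ω => A ω = astar ∧ C ω = c) =
      Pr p (fun ω => C ω = c ∧ Mpot astar ω = m) / Pr p (fun ω => C ω = c) := by
    have enum : Pr p (fun ω => M ω = m ∧ (A ω = astar ∧ C ω = c)) =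
        Pr p (fun ω => A ω = astar ∧ C ω = c ∧ Mpot astar ω = m) := by
      refine Pr_congr p fun ω => ?_
      constructor
      · rintro ⟨hm, hA', hc'⟩
        refine ⟨hA', hc', ?_⟩
        rw [← hm, hconsM ω, hA']
      · rintro ⟨hA', hc', hm⟩
        refine ⟨?_, hA', hc'⟩
        rw [hconsM ω, hA', hm]
    calc cPr p (fun ω => M ω = m) (fun ω => A ω = astar ∧ C ω = c)
        = Pr p (fun ω => M ω = m ∧ (A ω = astar ∧ C ω = c)) /
            Pr p (fun ω => A ω = astar ∧ C ω = c) := rfl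
      _ = (Pr p (fun ω => A ω = astar) * Pr p (fun ω => C ω = c ∧ Mpot astar ω = m)) /
            (Pr p (fun ω => A ω = astar) * Pr p (fun ω => C ω = c)) := by
            rw [enum, h1 astar astar, h2 astar]
      _ = _ := mul_div_mul_left _ _ (ne_of_gt (hApos astar))
  -- the cEV factor
  have eev : ∀ ω, (A ω = a ∧ M ω = m ∧ C ω = c) ↔ (A ω = a ∧ C ω = c ∧ Mpot a ω = m) := by
    intro ω
    constructor
    · rintro ⟨h1', h2', h3'⟩
      refine ⟨h1', h3', ?_⟩
      rw [← h2', hconsM ω, h1']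
    · rintro ⟨h1', h3', h2'⟩
      refine ⟨h1', ?_, h3'⟩
      rw [hconsM ω, h1', h2']
  have eY : ∀ ω, (A ω = a ∧ C ω = c ∧ Mpot a ω = m) → Y ω = Ypot a m ω := by
    rintro ω ⟨h1', h3', h2'⟩
    rw [hconsY ω, hconsM ω, h1', h2']
  have hDpos : 0 < Pr p (fun ω => A ω = a ∧ C ω = c ∧ Mpot a ω = m) := by
    obtain ⟨hnum, -⟩ := cPr_pos hp (hposM a c m hwpos)
    refine lt_of_lt_of_eq hnum (Pr_congr p fun ω => ?_)
    constructor
    · rintro ⟨hm', hA', hc'⟩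
      exact ⟨hA', hc', by rw [← hm', hconsM ω, hA']⟩
    · rintro ⟨hA', hc', hm'⟩
      exact ⟨by rw [hconsM ω, hA', hm'], hA', hc'⟩
  have hDeq : Pr p (fun ω => A ω = a ∧ C ω = c ∧ Mpot a ω = m) =
      Pr p (fun ω => A ω = a) * Pr p (fun ω => C ω = c ∧ Mpot a ω = m) := h1 a a
  have hIa := I3 a a
  have eWa : Wt p (fun ω => (A ω = a ∧ C ω = c) ∧ Mpot a ω = m) (fun ω => Ypot a m ω) =
      Wt p (fun ω => A ω = a ∧ C ω = c ∧ Mpot a ω = m) (fun ω => Ypot a m ω) :=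
    Wt_congr p (fun ω => and_assoc) (fun _ _ => rfl)
  have ePa : Pr p (fun ω => (A ω = a ∧ C ω = c) ∧ Mpot a ω = m) =
      Pr p (fun ω => A ω = a ∧ C ω = c ∧ Mpot a ω = m) :=
    Pr_congr p (fun ω => and_assoc)
  rw [eWa, ePa, h2 a, hDeq, h4 a] at hIa
  have hcEV : cEV p Y (fun ω => A ω = a ∧ M ω = m ∧ C ω = c) =
      Wt p (fun ω => C ω = c) (fun ω => Ypot a m ω) / Pr p (fun ω => C ω = c) := by
    calc cEV p Y (fun ω => A ω = a ∧ M ω = m ∧ C ω = c)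
        = Wt p (fun ω => A ω = a ∧ M ω = m ∧ C ω = c) Y /
            Pr p (fun ω => A ω = a ∧ M ω = m ∧ C ω = c) := rfl
      _ = Wt p (fun ω => A ω = a ∧ C ω = c ∧ Mpot a ω = m) (fun ω => Ypot a m ω) /
            (Pr p (fun ω => A ω = a) * Pr p (fun ω => C ω = c ∧ Mpot a ω = m)) := by
            rw [Wt_congr p eev eY, Pr_congr p eev, hDeq]
      _ = Wt p (fun ω => C ω = c) (fun ω => Ypot a m ω) / Pr p (fun ω => C ω = c) := by
            have hprodpos : 0 < Pr p (fun ω => A ω = a) *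
                Pr p (fun ω => C ω = c ∧ Mpot a ω = m) := by
              rw [← hDeq]; exact hDpos
            rw [div_eq_div_iff (ne_of_gt hprodpos) (ne_of_gt hwpos)]
            have hcan := mul_left_cancel₀ (ne_of_gt (hApos a))
              (show Pr p (fun ω => A ω = a) * (Pr p (fun ω => C ω = c) *
                  Wt p (fun ω => A ω = a ∧ C ω = c ∧ Mpot a ω = m) (fun ω => Ypot a m ω)) =
                Pr p (fun ω => A ω = a) * (Pr p (fun ω => C ω = c ∧ Mpot a ω = m) *
                  (Pr p (fun ω => A ω = a) *
                    Wt p (fun ω => C ω = c) (fun ω => Ypot a m ω))) from by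
                linear_combination hIa)
            linear_combination hcan
  -- LHS via sequential ignorability at arm astar
  have hIs := I3 astar astar
  have eWs : Wt p (fun ω => (A ω = astar ∧ C ω = c) ∧ Mpot astar ω = m)
        (fun ω => Ypot a m ω) =
      Wt p (fun ω => A ω = astar ∧ C ω = c ∧ Mpot astar ω = m) (fun ω => Ypot a m ω) :=
    Wt_congr p (fun ω => and_assoc) (fun _ _ => rfl)
  have ePs : Pr p (fun ω => (A ω = astar ∧ C ω = c) ∧ Mpot astar ω = m) =
      Pr p (fun ω => A ω = astar ∧ C ω = c ∧ Mpot astar ω = m) :=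
    Pr_congr p (fun ω => and_assoc)
  rw [eWs, ePs, h2 astar, h1 astar astar, h3 astar astar, h4 astar] at hIs
  have hS : Pr p (fun ω => C ω = c) *
        Wt p (fun ω => C ω = c ∧ Mpot astar ω = m) (fun ω => Ypot a m ω) =
      Pr p (fun ω => C ω = c ∧ Mpot astar ω = m) *
        Wt p (fun ω => C ω = c) (fun ω => Ypot a m ω) := by
    have c1 := mul_left_cancel₀ (ne_of_gt (hApos astar))
      (show Pr p (fun ω => A ω = astar) * (Pr p (fun ω => A ω = astar) *
          (Pr p (fun ω => C ω = c) *
            Wt p (fun ω => C ω = c ∧ Mpot astar ω = m) (fun ω => Ypot a m ω))) =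
        Pr p (fun ω => A ω = astar) * (Pr p (fun ω => A ω = astar) *
          (Pr p (fun ω => C ω = c ∧ Mpot astar ω = m) *
            Wt p (fun ω => C ω = c) (fun ω => Ypot a m ω))) from by
        linear_combination hIs)
    exact mul_left_cancel₀ (ne_of_gt (hApos astar)) c1
  rw [hcEV, hcPr]
  have hfin : Pr p (fun ω => C ω = c) *
      (Wt p (fun ω => C ω = c) (fun ω => Ypot a m ω) / Pr p (fun ω => C ω = c) *
        (Pr p (fun ω => C ω = c ∧ Mpot astar ω = m) / Pr p (fun ω => C ω = c))) =
      Pr p (fun ω => C ω = c ∧ Mpot astar ω = m) *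
        Wt p (fun ω => C ω = c) (fun ω => Ypot a m ω) / Pr p (fun ω => C ω = c) := by
    field_simp
  rw [hfin, eq_div_iff (ne_of_gt hwpos)]
  linear_combination hS
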